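/- Let $N\ge 7$ be an integer. The eigenvalues of the Jacobian at $p_6=(\bar\alpha,\bar\alpha)$ of the vector field $X$ are $\mu_{1,2}=\tfrac{\sin\bar\alpha\cos\bar\alpha}{2}(N\pm\sqrt{N^2-8N+8})$, and both are real and strictly positive; in particular $N^2-8N+8>0$ ensures they are distinct real numbers. -/

import Mathlib

theorem stmt_6 (m n : ℕ) (hm : 2 ≤ m) (hn : 2 ≤ n) (N : ℕ) (hN : N + 1 = m + n)
    (hN7 : 7 ≤ N)
    (α : ℝ) (hα : α = Real.arctan (Real.sqrt (((n : ℝ) - 1) / ((m : ℝ) - 1))))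
    (X₁ X₂ : ℝ → ℝ → ℝ)
    (hX₁ : ∀ u v, X₁ u v = Real.cos u * Real.sin u * Real.sin (u - v))
    (hX₂ : ∀ u v, X₂ u v = ((m : ℝ) - 1) * Real.sin u * Real.sin v
        - ((n : ℝ) - 1) * Real.cos u * Real.cos v)
    (J : Matrix (Fin 2) (Fin 2) ℝ)
    (hJ : J = Matrix.of
      ![![deriv (fun u => X₁ u α) α, deriv (fun v => X₁ α v) α],
        ![deriv (fun u => X₂ u α) α, deriv (fun v => X₂ α v) α]])
    (μ₁ μ₂ : ℝ)
    (hμ₁ : μ₁ = Real.sin α * Real.cos α / 2 * ((N : ℝ) + Real.sqrt ((N : ℝ)^2 - 8*N + 8)))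
    (hμ₂ : μ₂ = Real.sin α * Real.cos α / 2 * ((N : ℝ) - Real.sqrt ((N : ℝ)^2 - 8*N + 8))) :
    0 < (N : ℝ)^2 - 8*N + 8 ∧ 0 < μ₁ ∧ 0 < μ₂ ∧ μ₁ ≠ μ₂ ∧
    Matrix.det (J - μ₁ • 1) = 0 ∧ Matrix.det (J - μ₂ • 1) = 0 := by
  have hNR : (7:ℝ) ≤ (N:ℝ) := by exact_mod_cast hN7
  have hD : 0 < (N : ℝ)^2 - 8*N + 8 := by nlinarith
  have hDnn : 0 ≤ (N : ℝ)^2 - 8*N + 8 := le_of_lt hD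
  have hsq : Real.sqrt ((N : ℝ)^2 - 8*N + 8) ^ 2 = (N : ℝ)^2 - 8*N + 8 :=
    Real.sq_sqrt hDnn
  set s := Real.sqrt ((N : ℝ)^2 - 8*N + 8) with hs
  have hspos : 0 < s := Real.sqrt_pos.mpr hD
  -- α ∈ (0, π/2)
  have htpos : 0 < Real.sqrt (((n : ℝ) - 1) / ((m : ℝ) - 1)) := by
    apply Real.sqrt_pos.mpr
    apply div_pos
    · have : (2:ℝ) ≤ (n:ℝ) := by exact_mod_cast hn
      linarith
    · have : (2:ℝ) ≤ (m:ℝ) := by exact_mod_cast hm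
      linarith
  have hαpos : 0 < α := by rw [hα]; exact by rw [← Real.arctan_zero]; exact Real.arctan_strictMono htpos
  have hαlt : α < Real.pi / 2 := by rw [hα]; exact Real.arctan_lt_pi_div_two _
  have hsin : 0 < Real.sin α :=
    Real.sin_pos_of_pos_of_lt_pi hαpos (by linarith [Real.pi_pos])
  have hcos : 0 < Real.cos α := Real.cos_pos_of_mem_Ioo ⟨by linarith, hαlt⟩
  have hsc : 0 < Real.sin α * Real.cos α := mul_pos hsin hcos
  -- the four derivatives
  have h11 : deriv (fun u => X₁ u α) α = Real.cos α * Real.sin α := by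
    have h : HasDerivAt (fun u => Real.cos u * Real.sin u * Real.sin (u - α))
        (Real.cos α * Real.sin α) α := by
      have := (((Real.hasDerivAt_cos α).mul (Real.hasDerivAt_sin α)).mul
        (((hasDerivAt_id α).sub_const α).sin))
      refine this.congr_deriv ?_
      simp [sub_self]
    simp only [hX₁]
    exact h.deriv
  have h12 : deriv (fun v => X₁ α v) α = -(Real.cos α * Real.sin α) := by
    have h : HasDerivAt (fun v => Real.cos α * Real.sin α * Real.sin (α - v))
        (-(Real.cos α * Real.sin α)) α := by
      have := (((hasDerivAt_const α α).sub (hasDerivAt_id α)).sin).const_mul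
        (Real.cos α * Real.sin α)
      refine this.congr_deriv ?_
      simp [sub_self]
    simp only [hX₁]
    exact h.deriv
  have hmn : (m : ℝ) - 1 + ((n : ℝ) - 1) = (N : ℝ) - 1 := by
    have : (N : ℝ) + 1 = (m : ℝ) + (n : ℝ) := by exact_mod_cast hN
    linarith
  have h21 : deriv (fun u => X₂ u α) α = ((N : ℝ) - 1) * (Real.sin α * Real.cos α) := by
    have h : HasDerivAt (fun u => ((m : ℝ) - 1) * Real.sin u * Real.sin α
        - ((n : ℝ) - 1) * Real.cos u * Real.cos α)
        (((N : ℝ) - 1) * (Real.sin α * Real.cos α)) α := by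
      have := ((((Real.hasDerivAt_sin α).const_mul ((m : ℝ) - 1)).mul_const
        (Real.sin α)).sub (((Real.hasDerivAt_cos α).const_mul
        ((n : ℝ) - 1)).mul_const (Real.cos α)))
      refine this.congr_deriv ?_
      rw [← hmn]; ring
    simp only [hX₂]
    exact h.deriv
  have h22 : deriv (fun v => X₂ α v) α = ((N : ℝ) - 1) * (Real.sin α * Real.cos α) := by
    have h : HasDerivAt (fun v => ((m : ℝ) - 1) * Real.sin α * Real.sin v
        - ((n : ℝ) - 1) * Real.cos α * Real.cos v)
        (((N : ℝ) - 1) * (Real.sin α * Real.cos α)) α := by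
      have := ((((Real.hasDerivAt_sin α).const_mul (((m : ℝ) - 1) * Real.sin α))).sub
        (((Real.hasDerivAt_cos α).const_mul (((n : ℝ) - 1) * Real.cos α))))
      refine this.congr_deriv ?_
      rw [← hmn]; ring
    simp only [hX₂]
    exact h.deriv
  refine ⟨hD, ?_, ?_, ?_, ?_, ?_⟩
  · rw [hμ₁]
    have : 0 < (N : ℝ) + s := by positivity
    positivity
  · rw [hμ₂]
    have hlt : s < (N : ℝ) := by
      rw [hs]
      rw [show ((N:ℝ)^2 - 8*N + 8 : ℝ) = (N:ℝ)^2 - 8*N + 8 from rfl]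
      have : Real.sqrt ((N : ℝ)^2 - 8*N + 8) < Real.sqrt ((N:ℝ)^2) := by
        apply Real.sqrt_lt_sqrt hDnn
        nlinarith
      calc Real.sqrt ((N : ℝ)^2 - 8*N + 8) < Real.sqrt ((N:ℝ)^2) := this
        _ = (N:ℝ) := Real.sqrt_sq (by linarith)
    have : 0 < (N : ℝ) - s := by linarith
    positivity
  · rw [hμ₁, hμ₂]
    intro h
    have : Real.sin α * Real.cos α / 2 * (2 * s) = 0 := by linarith [h]
    nlinarith
  · rw [hJ, hμ₁]
    rw [Matrix.det_fin_two]
    simp [Matrix.smul_apply, Matrix.one_apply, h11, h12, h21, h22]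
    linear_combination ((Real.sin α * Real.cos α)^2 / 4) * hsq
  · rw [hJ, hμ₂]
    rw [Matrix.det_fin_two]
    simp [Matrix.smul_apply, Matrix.one_apply, h11, h12, h21, h22]
    linear_combination ((Real.sin α * Real.cos α)^2 / 4) * hsq
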